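/- The complete graph K_{10} is the union of 3 planar subgraphs each of girth at least 4 (i.e., 3 triangle-free planar subgraphs), and consequently the 4-girth-thickness of K_{10} equals 3: θ(4, K_{10}) = 3. -/

import Mathlib

/-- A simple graph is *planar* if it can be drawn in the Euclidean plane: vertices are
distinct points, each edge is drawn as an injective arc between the images of its
endpoints, and no interior point of an arc is the image of a vertex or lies on the arc
of a different edge. -/
def SimpleGraph.IsPlanar {V : Type*} (G : SimpleGraph V) : Prop :=
  ∃ (f : V → ℝ × ℝ) (γ : ∀ u v, G.Adj u v → _root_.Path (f u) (f v)),
    Function.Injective f ∧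
    (∀ u v (h : G.Adj u v), Function.Injective (γ u v h)) ∧
    (∀ u v (h : G.Adj u v) (t : unitInterval), t ≠ 0 → t ≠ 1 → ∀ w, γ u v h t ≠ f w) ∧
    (∀ u v (h : G.Adj u v) (u' v' : V) (h' : G.Adj u' v'), s(u, v) ≠ s(u', v') →
      ∀ (s t : unitInterval), s ≠ 0 → s ≠ 1 → t ≠ 0 → t ≠ 1 →
        γ u v h s ≠ γ u' v' h' t)

/-- The `g`-girth-thickness `θ(g, G)` of a graph `G`: the minimum number of planar
subgraphs, each of girth at least `g`, whose union is `G`. -/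
noncomputable def girthThickness {V : Type*} (g : ℕ∞) (G : SimpleGraph V) : ℕ :=
  sInf {m : ℕ | ∃ H : Fin m → SimpleGraph V,
    (∀ i, (H i).IsPlanar) ∧ (∀ i, g ≤ (H i).egirth) ∧ (⨆ i, H i) = G}

/-!
Upper bound: `K₁₀` is the union of three explicit triangle-free graphs, each drawn in the plane
with straight edges between integer points. Such a drawing is planar as soon as no vertex lies on
the line through an edge and, for any two disjoint edges, the endpoints of one lie strictly on the
same side of the line through the other: finitely many sign conditions on integer orientation
determinants.

Lower bound: girth at least 4 means triangle-free, and two triangle-free graphs cannot cover `K₆`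
(`R(3, 3) = 6`): a vertex has at least 5 neighbours, so at least 3 of them in one of the graphs,
say `A`; these are pairwise non-adjacent in `A`, hence form a triangle in the other graph.
-/

-- Twice the signed area of the triangle `abc`: its sign tells on which side of the line `ab` the
-- point `c` lies.
def orient {R : Type*} [CommRing R] (a b c : R × R) : R :=
  (b.1 - a.1) * (c.2 - a.2) - (b.2 - a.2) * (c.1 - a.1)

section orient

variable {R : Type*} [CommRing R]

theorem orient_map {S : Type*} [CommRing S] (φ : R →+* S) (a b c : R × R) :
    orient (Prod.map φ φ a) (Prod.map φ φ b) (Prod.map φ φ c) = φ (orient a b c) := by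
  simp only [orient, Prod.map_fst, Prod.map_snd, map_sub, map_mul]

theorem orient_add_smul (a b c d : R × R) {α β : R} (h : α + β = 1) :
    orient a b (α • c + β • d) = α * orient a b c + β * orient a b d := by
  obtain rfl : α = 1 - β := eq_sub_of_add_eq h
  simp only [orient, Prod.fst_add, Prod.snd_add, Prod.smul_fst, Prod.smul_snd, smul_eq_mul]
  ring

theorem orient_eq_zero_of_mem_segment [PartialOrder R] {a b p : R × R}
    (hp : p ∈ segment R a b) : orient a b p = 0 := by
  obtain ⟨α, β, -, -, hαβ, rfl⟩ := hp
  rw [orient_add_smul a b a b hαβ]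
  simp only [orient]
  ring

variable [LinearOrder R] [IsStrictOrderedRing R] {a b c d p : R × R}

theorem orient_ne_zero_of_mem_segment (h : 0 < orient a b c * orient a b d)
    (hp : p ∈ segment R c d) : orient a b p ≠ 0 := by
  obtain ⟨α, β, hα, hβ, hαβ, rfl⟩ := hp
  rw [orient_add_smul a b c d hαβ]
  have hc : orient a b c ≠ 0 := left_ne_zero_of_mul h.ne'
  -- a convex combination of two numbers of the same sign has that sign
  have : 0 < (α * orient a b c + β * orient a b d) * orient a b c := by
    rcases hα.eq_or_lt with rfl | hα
    · simpa [(zero_add β).symm.trans hαβ, mul_comm] using h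
    · nlinarith [mul_pos hα (mul_self_pos.2 hc), mul_nonneg hβ h.le]
  exact left_ne_zero_of_mul this.ne'

theorem disjoint_openSegment_of_mul_orient_pos (h : 0 < orient a b c * orient a b d) :
    Disjoint (openSegment R a b) (openSegment R c d) :=
  Set.disjoint_left.2 fun _ hab hcd ↦ orient_ne_zero_of_mem_segment h
    (openSegment_subset_segment _ _ _ hcd)
    (orient_eq_zero_of_mem_segment (openSegment_subset_segment _ _ _ hab))

theorem disjoint_openSegment_of_orient_ne_zero (h : orient a b c ≠ 0) :
    Disjoint (openSegment R a b) (openSegment R a c) := by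
  refine Set.disjoint_left.2 fun p hab ⟨α, β, _, hβ, hαβ, hp⟩ ↦ ?_
  have : orient a b p = β * orient a b c := by
    rw [← hp, orient_add_smul a b a c hαβ,
      orient_eq_zero_of_mem_segment (left_mem_segment R a b), mul_zero, zero_add]
  exact mul_ne_zero hβ.ne' h
    (this ▸ orient_eq_zero_of_mem_segment (openSegment_subset_segment _ _ _ hab))

end orient

namespace SimpleGraph

variable {V : Type*} {G A B : SimpleGraph V}

theorem isPlanar_of_straightLine (f : V → ℝ × ℝ) (hf : Function.Injective f)
    (hvert : ∀ u v w, G.Adj u v → f w ∉ openSegment ℝ (f u) (f v))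
    (hedge : ∀ u v u' v', G.Adj u v → G.Adj u' v' → s(u, v) ≠ s(u', v') →
      Disjoint (openSegment ℝ (f u) (f v)) (openSegment ℝ (f u') (f v'))) :
    G.IsPlanar := by
  have mem_open {a b : ℝ × ℝ} {t : unitInterval} (h0 : t ≠ 0) (h1 : t ≠ 1) :
      Path.segment a b t ∈ openSegment ℝ a b :=
    lineMap_mem_openSegment _ _ _
      ⟨lt_of_le_of_ne t.2.1 (Subtype.coe_ne_coe.2 h0).symm,
        lt_of_le_of_ne t.2.2 (Subtype.coe_ne_coe.2 h1)⟩
  refine ⟨f, fun u v _ ↦ Path.segment (f u) (f v), hf,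
    fun u v h ↦ Path.segment_injective_of_ne (hf.ne h.ne), ?_, ?_⟩
  · intro u v h t h0 h1 w hw
    exact hvert u v w h (hw ▸ mem_open h0 h1)
  · intro u v h u' v' h' hne s t hs0 hs1 ht0 ht1 hst
    exact Set.disjoint_left.1 (hedge u v u' v' h h' hne) (mem_open hs0 hs1)
      (hst ▸ mem_open ht0 ht1)

theorem isPlanar_of_orient (f : V → ℝ × ℝ) (hf : Function.Injective f)
    (hvert : ∀ u v w, G.Adj u v → w ≠ u → w ≠ v → orient (f u) (f v) (f w) ≠ 0)
    (hcross : ∀ u v u' v', G.Adj u v → G.Adj u' v' → u' ≠ u → u' ≠ v → v' ≠ u → v' ≠ v →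
      0 < orient (f u) (f v) (f u') * orient (f u) (f v) (f v') ∨
      0 < orient (f u') (f v') (f u) * orient (f u') (f v') (f v)) :
    G.IsPlanar := by
  have shared {a b c} (hab : G.Adj a b) (hac : G.Adj a c) (hbc : b ≠ c) :
      Disjoint (openSegment ℝ (f a) (f b)) (openSegment ℝ (f a) (f c)) :=
    disjoint_openSegment_of_orient_ne_zero (hvert a b c hab hac.ne' hbc.symm)
  refine isPlanar_of_straightLine f hf (fun u v w h hw ↦ ?_) (fun u v u' v' h h' hne ↦ ?_)
  · rcases eq_or_ne w u with rfl | hwu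
    · exact h.ne (hf (left_mem_openSegment_iff.1 hw))
    rcases eq_or_ne w v with rfl | hwv
    · exact h.ne (hf (right_mem_openSegment_iff.1 hw))
    exact hvert u v w h hwu hwv
      (orient_eq_zero_of_mem_segment (openSegment_subset_segment _ _ _ hw))
  rcases eq_or_ne u' u with rfl | hu'u
  · exact shared h h' fun hv ↦ hne (by rw [hv])
  rcases eq_or_ne u' v with rfl | hu'v
  · rw [openSegment_symm ℝ (f u)]
    exact shared h.symm h' fun hu ↦ hne (by rw [hu, Sym2.eq_swap])
  rcases eq_or_ne v' u with rfl | hv'u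
  · rw [openSegment_symm ℝ (f u')]
    exact shared h h'.symm fun hv ↦ hne (by rw [hv, Sym2.eq_swap])
  rcases eq_or_ne v' v with rfl | hv'v
  · rw [openSegment_symm ℝ (f u), openSegment_symm ℝ (f u')]
    exact shared h.symm h'.symm fun hu ↦ hne (by rw [hu])
  rcases hcross u v u' v' h h' hu'u hu'v hv'u hv'v with hpos | hpos
  · exact disjoint_openSegment_of_mul_orient_pos hpos
  · exact (disjoint_openSegment_of_mul_orient_pos hpos).symm

theorem isPlanar_of_intOrient (g : V → ℤ × ℤ) (hg : Function.Injective g)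
    (hvert : ∀ u v w, G.Adj u v → w ≠ u → w ≠ v → orient (g u) (g v) (g w) ≠ 0)
    (hcross : ∀ u v u' v', G.Adj u v → G.Adj u' v' → u' ≠ u → u' ≠ v → v' ≠ u → v' ≠ v →
      0 < orient (g u) (g v) (g u') * orient (g u) (g v) (g v') ∨
      0 < orient (g u') (g v') (g u) * orient (g u') (g v') (g v)) :
    G.IsPlanar := by
  let φ := Int.castRingHom ℝ
  have hφ : Function.Injective (Prod.map φ φ) := Int.cast_injective.prodMap Int.cast_injective
  refine isPlanar_of_orient (fun v ↦ Prod.map φ φ (g v)) (hφ.comp hg) ?_ ?_ <;>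
    simp only [orient_map, φ, eq_intCast, Int.cast_ne_zero, ← Int.cast_mul, Int.cast_pos]
  exacts [hvert, hcross]


theorem cliqueFree_three_iff :
    G.CliqueFree 3 ↔ ∀ a b c, G.Adj a b → G.Adj a c → ¬G.Adj b c := by
  classical
  simp only [CliqueFree, is3Clique_iff]
  grind

theorem four_le_egirth_iff_cliqueFree_three : 4 ≤ G.egirth ↔ G.CliqueFree 3 := by
  have : G.CliqueFree 3 ↔ ¬∃ s, G.IsNClique 3 s := by simp [CliqueFree]
  rw [this, is3Clique_iff_exists_cycle_length_three, le_egirth]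
  push Not
  refine forall_congr' fun u ↦ forall_congr' fun w ↦ imp_congr_right fun hw ↦ ?_
  have := hw.three_le_length
  constructor <;> intro h
  · exact fun h3 ↦ absurd (h3 ▸ h) (by decide)
  · exact_mod_cast (show 4 ≤ w.length by omega)

-- The `A`-neighbourhood of `x` is `A`-independent, hence a `B`-clique.
theorem card_neighborFinset_le_two_of_sup_eq_top [Fintype V] [DecidableRel A.Adj]
    (hA : A.CliqueFree 3) (hB : B.CliqueFree 3) (hAB : A ⊔ B = ⊤) (x : V) :
    (A.neighborFinset x).card ≤ 2 := by
  by_contra! hcard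
  obtain ⟨a, ha, b, hb, c, hc, hab, hac, hbc⟩ := Finset.two_lt_card.1 hcard
  simp only [mem_neighborFinset] at ha hb hc
  have hB_adj {y z} (hy : A.Adj x y) (hz : A.Adj x z) (hyz : y ≠ z) : B.Adj y z := by
    have : (A ⊔ B).Adj y z := hAB ▸ hyz
    exact this.resolve_left fun hA_yz ↦ cliqueFree_three_iff.1 hA x y z hy hz hA_yz
  exact cliqueFree_three_iff.1 hB a b c (hB_adj ha hb hab) (hB_adj ha hc hac) (hB_adj hb hc hbc)

theorem sup_ne_top_of_cliqueFree_three [Fintype V] (hV : 6 ≤ Fintype.card V)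
    (hA : A.CliqueFree 3) (hB : B.CliqueFree 3) : A ⊔ B ≠ ⊤ := by
  classical
  intro hAB
  obtain ⟨x⟩ : Nonempty V := Fintype.card_pos_iff.1 (by omega)
  have hcover : Finset.univ.erase x ⊆ A.neighborFinset x ∪ B.neighborFinset x := by
    intro y hy
    have : (A ⊔ B).Adj x y := hAB ▸ (Finset.ne_of_mem_erase hy).symm
    simpa using this
  have := (Finset.card_le_card hcover).trans (Finset.card_union_le _ _)
  have := card_neighborFinset_le_two_of_sup_eq_top hA hB hAB x
  have := card_neighborFinset_le_two_of_sup_eq_top hB hA (sup_comm A B ▸ hAB) x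
  simp only [Finset.mem_univ, Finset.card_erase_of_mem, Finset.card_univ] at *
  omega

theorem three_le_of_iSup_eq_top [Fintype V] (hV : 6 ≤ Fintype.card V) {m : ℕ}
    (H : Fin m → SimpleGraph V) (hH : ∀ i, (H i).CliqueFree 3) (hsup : ⨆ i, H i = ⊤) :
    3 ≤ m := by
  by_contra! hm
  -- pad the family with empty graphs to a pair
  let pad (j : ℕ) : SimpleGraph V := if h : j < m then H ⟨j, h⟩ else ⊥
  have hpad (j : ℕ) : (pad j).CliqueFree 3 := by
    unfold pad
    split_ifs
    exacts [hH _, cliqueFree_bot (by norm_num)]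
  refine sup_ne_top_of_cliqueFree_three hV (hpad 0) (hpad 1) (top_unique fun u v huv ↦ ?_)
  obtain ⟨⟨i, hi⟩, hadj⟩ := iSup_adj.1 (hsup ▸ huv : (⨆ i, H i).Adj u v)
  obtain rfl | rfl : i = 0 ∨ i = 1 := by omega
  · exact Or.inl (by simpa [pad, hi] using hadj)
  · exact Or.inr (by simpa [pad, hi] using hadj)

end SimpleGraph

namespace K10

open SimpleGraph

-- Three triangle-free graphs with 16 + 15 + 14 = 45 edges partitioning `K₁₀`, each given together
-- with an integer straight-line drawing.

def H₁ : SimpleGraph (Fin 10) := fromRel fun u v ↦ (u, v) ∈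
  [(0, 4), (0, 6), (0, 8), (1, 3), (1, 5), (1, 7), (2, 6), (2, 8), (2, 9), (3, 9), (4, 7), (5, 6),
    (5, 9), (6, 7), (7, 8), (7, 9)]

def H₂ : SimpleGraph (Fin 10) := fromRel fun u v ↦ (u, v) ∈
  [(0, 2), (0, 3), (0, 9), (1, 2), (1, 6), (1, 9), (2, 4), (2, 7), (3, 5), (3, 8), (4, 5), (4, 6),
    (4, 8), (5, 7), (8, 9)]

def H₃ : SimpleGraph (Fin 10) := fromRel fun u v ↦ (u, v) ∈
  [(0, 1), (0, 5), (0, 7), (1, 4), (1, 8), (2, 3), (2, 5), (3, 4), (3, 6), (3, 7), (4, 9), (5, 8),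
    (6, 8), (6, 9)]

instance : DecidableRel H₁.Adj := inferInstanceAs (DecidableRel (fromRel _).Adj)

instance : DecidableRel H₂.Adj := inferInstanceAs (DecidableRel (fromRel _).Adj)

instance : DecidableRel H₃.Adj := inferInstanceAs (DecidableRel (fromRel _).Adj)

def pos₁ : Fin 10 → ℤ × ℤ :=
  ![(45, 50), (37, 25), (-2, 99), (38, 34), (64, 32),
    (-1, 1), (98, 1), (45, 43), (28, 62), (21, 42)]

def pos₂ : Fin 10 → ℤ × ℤ :=
  ![(8, 40), (101, -2), (-3, -2), (20, 33), (29, 21),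
    (13, 24), (38, 40), (7, 21), (19, 50), (-2, 103)]

def pos₃ : Fin 10 → ℤ × ℤ :=
  ![(14, 49), (7, 46), (14, 37), (24, 39), (-3, 99),
    (15, 43), (2, -3), (15, 46), (11, 38), (100, 2)]

theorem isPlanar_H₁ : H₁.IsPlanar := isPlanar_of_intOrient pos₁ (by decide) (by decide) (by decide)

theorem isPlanar_H₂ : H₂.IsPlanar := isPlanar_of_intOrient pos₂ (by decide) (by decide) (by decide)

theorem isPlanar_H₃ : H₃.IsPlanar := isPlanar_of_intOrient pos₃ (by decide) (by decide) (by decide)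

theorem cliqueFree_three_H₁ : H₁.CliqueFree 3 := cliqueFree_three_iff.2 (by decide)

theorem cliqueFree_three_H₂ : H₂.CliqueFree 3 := cliqueFree_three_iff.2 (by decide)

theorem cliqueFree_three_H₃ : H₃.CliqueFree 3 := cliqueFree_three_iff.2 (by decide)

theorem sup_eq_top : H₁ ⊔ H₂ ⊔ H₃ = ⊤ := by
  ext u v
  simp only [sup_adj, top_adj]
  revert u v
  decide

theorem exists_planar_girth_four_cover : ∃ H : Fin 3 → SimpleGraph (Fin 10),
    (∀ i, (H i).IsPlanar) ∧ (∀ i, 4 ≤ (H i).egirth) ∧ (⨆ i, H i) = completeGraph (Fin 10) := by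
  refine ⟨![H₁, H₂, H₃], fun i ↦ ?_, fun i ↦ four_le_egirth_iff_cliqueFree_three.2 ?_, ?_⟩
  · fin_cases i
    exacts [isPlanar_H₁, isPlanar_H₂, isPlanar_H₃]
  · fin_cases i
    exacts [cliqueFree_three_H₁, cliqueFree_three_H₂, cliqueFree_three_H₃]
  · rw [iSup_fin_three]
    exact sup_eq_top

end K10

theorem girthThickness_four_K10 :
    (∃ H : Fin 3 → SimpleGraph (Fin 10),
      (∀ i, (H i).IsPlanar) ∧ (∀ i, 4 ≤ (H i).egirth) ∧
      (⨆ i, H i) = SimpleGraph.completeGraph (Fin 10)) ∧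
    girthThickness 4 (SimpleGraph.completeGraph (Fin 10)) = 3 := by
  have hcover := K10.exists_planar_girth_four_cover
  refine ⟨hcover, le_antisymm (Nat.sInf_le hcover) (le_csInf ⟨3, hcover⟩ ?_)⟩
  rintro m ⟨H, -, hgirth, hsup⟩
  exact SimpleGraph.three_le_of_iSup_eq_top (by simp) H
    (fun i ↦ SimpleGraph.four_le_egirth_iff_cliqueFree_three.1 (hgirth i)) hsup
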